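/- arXiv:1911.02319 — 4 statements merged into one kernel-verified Lean document; each statement's English description precedes it below -/
import Mathlib

section
/- Let (Ω, F, P) be a probability space and G ⊆ F a sub-σ-algebra. Let q, q⋆, γ, v be G-measurable real random variables with γ ≥ 0 and v ≥ 0 almost surely, and let Y be a square-integrable real random variable. Let L > 0 and B > 0 be constants. Assume that almost surely: (i) E[Y | G] · (q − q⋆) ≥ L (q − q⋆)², and (ii) E[Y² | G] ≤ B (4 + 3v + (q − q⋆)²). Then almost surely E[(q − γY − q⋆)² | G] ≤ (1 − 2Lγ + Bγ²)(q − q⋆)² + Bγ²(4 + 3v). -/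
open MeasureTheory

/-! With `x = q - q⋆` and `γ` both `G`-measurable, expanding the square and pulling them out of
the conditional expectation gives `E[(x - γY)² | G] = x² - 2xγ E[Y | G] + γ² E[Y² | G]`, and (i), (ii)
bound the last two terms. The pull-out is only justified where `x` and `γ` are bounded, so the
expansion is proved on the `G`-measurable sets `{|x|, |γ| ≤ n}` and glued together. If `(x - γY)²`
is not integrable its conditional expectation is `0` by convention, and the expansion is still an
upper bound by the conditional Jensen inequality `E[Y | G]² ≤ E[Y² | G]`. -/

section

variable {Ω : Type*} {m m0 : MeasurableSpace Ω} {μ : Measure Ω}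

lemma sq_condExp_ae_le_condExp_sq [IsFiniteMeasure μ] (hm : m ≤ m0) {Y : Ω → ℝ}
    (hY : MemLp Y 2 μ) : μ[Y|m] ^ 2 ≤ᵐ[μ] μ[Y ^ 2|m] := by
  have hvar_nonneg : 0 ≤ᵐ[μ] ProbabilityTheory.condVar m Y μ :=
    condExp_nonneg (ae_of_all _ fun ω => sq_nonneg _)
  filter_upwards [hvar_nonneg, ProbabilityTheory.condVar_ae_eq_condExp_sq_sub_sq_condExp hm hY]
    with ω hω hω_eq
  simpa only [hω_eq, Pi.zero_apply, Pi.sub_apply, sub_nonneg] using hω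

lemma condExp_ae_eq_of_forall_indicator_ae_eq {ι : Type*} [Countable ι] {f g : Ω → ℝ}
    (hf : Integrable f μ) {s : ι → Set Ω} (hs : ∀ i, MeasurableSet[m] (s i))
    (hcover : ∀ ω, ∃ i, ω ∈ s i) (h : ∀ i, μ[(s i).indicator f|m] =ᵐ[μ] (s i).indicator g) :
    μ[f|m] =ᵐ[μ] g := by
  have hloc : ∀ i, ∀ᵐ ω ∂μ, ω ∈ s i → μ[f|m] ω = g ω := fun i => by
    filter_upwards [condExp_indicator hf (hs i), h i] with ω hf_ind hg_ind hω
    simpa [Set.indicator_of_mem hω] using hf_ind.symm.trans hg_ind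
  filter_upwards [ae_all_iff.2 hloc] with ω hω
  obtain ⟨i, hi⟩ := hcover ω
  exact hω i hi

lemma condExp_sq_sub_mul_ae_eq_of_bound [IsFiniteMeasure μ] (hm : m ≤ m0) {Y a b : Ω → ℝ}
    (hY : MemLp Y 2 μ) (ha : StronglyMeasurable[m] a) (hb : StronglyMeasurable[m] b) {C : ℝ}
    (ha_bdd : ∀ᵐ ω ∂μ, ‖a ω‖ ≤ C) (hb_bdd : ∀ᵐ ω ∂μ, ‖b ω‖ ≤ C) :
    μ[(a - b * Y) ^ 2|m] =ᵐ[μ] a ^ 2 - 2 * a * b * μ[Y|m] + b ^ 2 * μ[Y ^ 2|m] := by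
  have hY1 : Integrable Y μ := hY.integrable one_le_two
  have hY2 : Integrable (Y ^ 2) μ := hY.integrable_sq
  have ha2_bdd : ∀ᵐ ω ∂μ, ‖(a ^ 2) ω‖ ≤ C ^ 2 := by
    filter_upwards [ha_bdd] with ω hω
    simpa using pow_le_pow_left₀ (norm_nonneg _) hω 2
  have hb2_bdd : ∀ᵐ ω ∂μ, ‖(b ^ 2) ω‖ ≤ C ^ 2 := by
    filter_upwards [hb_bdd] with ω hω
    simpa using pow_le_pow_left₀ (norm_nonneg _) hω 2
  have hab_bdd : ∀ᵐ ω ∂μ, ‖(2 * a * b) ω‖ ≤ 2 * C ^ 2 := by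
    filter_upwards [ha_bdd, hb_bdd] with ω hωa hωb
    simp only [Pi.mul_apply, Pi.ofNat_apply, norm_mul, Real.norm_ofNat]
    nlinarith [norm_nonneg (a ω), norm_nonneg (b ω)]
  have ha2_sm : StronglyMeasurable[m] (a ^ 2) := ha.pow 2
  have hb2_sm : StronglyMeasurable[m] (b ^ 2) := hb.pow 2
  have hab_sm : StronglyMeasurable[m] (2 * a * b) := (stronglyMeasurable_const.mul ha).mul hb
  have ha2_int : Integrable (a ^ 2) μ := .of_bound (ha2_sm.mono hm).aestronglyMeasurable _ ha2_bdd
  have habY_int : Integrable (2 * a * b * Y) μ :=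
    hY1.bdd_mul (hab_sm.mono hm).aestronglyMeasurable hab_bdd
  have hbY2_int : Integrable (b ^ 2 * Y ^ 2) μ :=
    hY2.bdd_mul (hb2_sm.mono hm).aestronglyMeasurable hb2_bdd
  have hexpand : (a - b * Y) ^ 2 = a ^ 2 - 2 * a * b * Y + b ^ 2 * Y ^ 2 := by ring
  rw [hexpand]
  filter_upwards [condExp_add (m := m) (ha2_int.sub habY_int) hbY2_int,
    condExp_sub (m := m) ha2_int habY_int,
    condExp_stronglyMeasurable_mul_of_bound hm hab_sm hY1 _ hab_bdd,
    condExp_stronglyMeasurable_mul_of_bound hm hb2_sm hY2 _ hb2_bdd] with ω h_add h_sub h_ab h_b2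
  simp only [Pi.add_apply, Pi.sub_apply] at h_add h_sub ⊢
  rw [h_add, h_sub, h_ab, h_b2, condExp_of_stronglyMeasurable hm ha2_sm ha2_int]

lemma condExp_sq_sub_mul_ae_eq [IsFiniteMeasure μ] (hm : m ≤ m0) {Y a b : Ω → ℝ}
    (hY : MemLp Y 2 μ) (ha : StronglyMeasurable[m] a) (hb : StronglyMeasurable[m] b)
    (hint : Integrable ((a - b * Y) ^ 2) μ) :
    μ[(a - b * Y) ^ 2|m] =ᵐ[μ] a ^ 2 - 2 * a * b * μ[Y|m] + b ^ 2 * μ[Y ^ 2|m] := by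
  set s : ℕ → Set Ω := fun n => {ω | ‖a ω‖ ≤ n ∧ ‖b ω‖ ≤ n}
  have hs : ∀ n, MeasurableSet[m] (s n) := fun n =>
    (ha.norm.measurableSet_le stronglyMeasurable_const).inter
      (hb.norm.measurableSet_le stronglyMeasurable_const)
  have hcover : ∀ ω, ∃ n, ω ∈ s n := fun ω =>
    let ⟨n, hn⟩ := exists_nat_ge (max ‖a ω‖ ‖b ω‖)
    ⟨n, (le_max_left _ _).trans hn, (le_max_right _ _).trans hn⟩
  refine condExp_ae_eq_of_forall_indicator_ae_eq hint hs hcover fun n => ?_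
  have hbdd : ∀ f : Ω → ℝ, (∀ ω ∈ s n, ‖f ω‖ ≤ n) → ∀ᵐ ω ∂μ, ‖(s n).indicator f ω‖ ≤ n :=
    fun f hf => ae_of_all _ fun ω => by
      by_cases hω : ω ∈ s n
      · simpa [Set.indicator_of_mem hω] using hf ω hω
      · simp [Set.indicator_of_notMem hω]
  have key := condExp_sq_sub_mul_ae_eq_of_bound hm hY (ha.indicator (hs n))
    (hb.indicator (hs n)) (hbdd a fun _ hω => hω.1) (hbdd b fun _ hω => hω.2)
  have h_lhs : (s n).indicator ((a - b * Y) ^ 2)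
      = ((s n).indicator a - (s n).indicator b * Y) ^ 2 := by
    ext ω; by_cases hω : ω ∈ s n <;> simp [hω]
  have h_rhs : (s n).indicator (a ^ 2 - 2 * a * b * μ[Y|m] + b ^ 2 * μ[Y ^ 2|m])
      = (s n).indicator a ^ 2 - 2 * (s n).indicator a * (s n).indicator b * μ[Y|m]
        + (s n).indicator b ^ 2 * μ[Y ^ 2|m] := by
    ext ω; by_cases hω : ω ∈ s n <;> simp [hω]
  rwa [h_lhs, h_rhs]

lemma condExp_sq_sub_mul_ae_le [IsFiniteMeasure μ] (hm : m ≤ m0) {Y a b : Ω → ℝ}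
    (hY : MemLp Y 2 μ) (ha : StronglyMeasurable[m] a) (hb : StronglyMeasurable[m] b) :
    μ[(a - b * Y) ^ 2|m] ≤ᵐ[μ] a ^ 2 - 2 * a * b * μ[Y|m] + b ^ 2 * μ[Y ^ 2|m] := by
  by_cases hint : Integrable ((a - b * Y) ^ 2) μ
  · exact (condExp_sq_sub_mul_ae_eq hm hY ha hb hint).le
  · -- the right-hand side is `(a - b E[Y|m])² + b² (E[Y²|m] - E[Y|m]²)`
    rw [condExp_of_not_integrable hint]
    filter_upwards [sq_condExp_ae_le_condExp_sq hm hY] with ω hω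
    simp only [Pi.add_apply, Pi.sub_apply, Pi.mul_apply, Pi.pow_apply, Pi.ofNat_apply] at hω ⊢
    nlinarith [sq_nonneg (a ω - b ω * μ[Y|m] ω), mul_le_mul_of_nonneg_left hω (sq_nonneg (b ω))]

end

theorem one_step_contraction_general {Ω : Type*} [m0 : MeasurableSpace Ω]
    (P : Measure Ω) [IsProbabilityMeasure P]
    (G : MeasurableSpace Ω) (hG : G ≤ m0)
    (q qstar γ v : Ω → ℝ)
    (hq : Measurable[G] q) (hqstar : Measurable[G] qstar)
    (hγ : Measurable[G] γ)
    (hγ0 : ∀ᵐ ω ∂P, 0 ≤ γ ω)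
    (Y : Ω → ℝ) (hY : MemLp Y 2 P)
    (L B : ℝ)
    (h1 : ∀ᵐ ω ∂P, L * (q ω - qstar ω) ^ 2 ≤ (P[Y|G]) ω * (q ω - qstar ω))
    (h2 : ∀ᵐ ω ∂P, (P[fun ω' => (Y ω') ^ 2|G]) ω ≤ B * (4 + 3 * v ω + (q ω - qstar ω) ^ 2)) :
    ∀ᵐ ω ∂P,
      (P[fun ω' => (q ω' - γ ω' * Y ω' - qstar ω') ^ 2|G]) ω
        ≤ (1 - 2 * L * γ ω + B * (γ ω) ^ 2) * (q ω - qstar ω) ^ 2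
          + B * (γ ω) ^ 2 * (4 + 3 * v ω) := by
  have hupdate : (fun ω' => (q ω' - γ ω' * Y ω' - qstar ω') ^ 2) = (q - qstar - γ * Y) ^ 2 := by
    ext ω; simp only [Pi.pow_apply, Pi.sub_apply, Pi.mul_apply]; ring
  rw [hupdate]
  change ∀ᵐ ω ∂P, (P[Y ^ 2|G]) ω ≤ _ at h2
  filter_upwards [condExp_sq_sub_mul_ae_le hG hY (hq.sub hqstar).stronglyMeasurable
    hγ.stronglyMeasurable, h1, h2, hγ0] with ω hexpand hdrift hsecond hγω
  simp only [Pi.add_apply, Pi.sub_apply, Pi.mul_apply, Pi.pow_apply, Pi.ofNat_apply] at hexpand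
  linarith [mul_le_mul_of_nonneg_left hdrift (mul_nonneg zero_le_two hγω),
    mul_le_mul_of_nonneg_left hsecond (sq_nonneg (γ ω))]

/-- One-step error contraction for the update `q' = q − γ Y`.
If `q, q⋆, γ, v` are `G`-measurable with `γ, v ≥ 0` a.s., `Y` is square-integrable and
(i) `E[Y|G] (q − q⋆) ≥ L (q − q⋆)²` a.s., (ii) `E[Y²|G] ≤ B (4 + 3v + (q − q⋆)²)` a.s.,
then a.s. `E[(q − γY − q⋆)²|G] ≤ (1 − 2Lγ + Bγ²)(q − q⋆)² + Bγ²(4 + 3v)`. -/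
theorem one_step_contraction {Ω : Type*} [m0 : MeasurableSpace Ω]
    (P : Measure Ω) [IsProbabilityMeasure P]
    (G : MeasurableSpace Ω) (hG : G ≤ m0)
    (q qstar γ v : Ω → ℝ)
    (hq : Measurable[G] q) (hqstar : Measurable[G] qstar)
    (hγ : Measurable[G] γ) (hv : Measurable[G] v)
    (hγ0 : ∀ᵐ ω ∂P, 0 ≤ γ ω) (hv0 : ∀ᵐ ω ∂P, 0 ≤ v ω)
    (Y : Ω → ℝ) (hY : MemLp Y 2 P)
    (L B : ℝ) (hL : 0 < L) (hB : 0 < B)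
    (h1 : ∀ᵐ ω ∂P, L * (q ω - qstar ω) ^ 2 ≤ (P[Y|G]) ω * (q ω - qstar ω))
    (h2 : ∀ᵐ ω ∂P, (P[fun ω' => (Y ω') ^ 2|G]) ω ≤ B * (4 + 3 * v ω + (q ω - qstar ω) ^ 2)) :
    ∀ᵐ ω ∂P,
      (P[fun ω' => (q ω' - γ ω' * Y ω' - qstar ω') ^ 2|G]) ω
        ≤ (1 - 2 * L * γ ω + B * (γ ω) ^ 2) * (q ω - qstar ω) ^ 2
          + B * (γ ω) ^ 2 * (4 + 3 * v ω) :=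
  one_step_contraction_general (m0 := m0) P G hG q qstar γ v hq hqstar hγ hγ0 Y hY L B h1 h2
end

section
/- Let (Ω, F, P) be a probability space, G ⊆ F a sub-σ-algebra, and M ≥ 1 an integer. Let M₁, …, M_M be G-measurable square-integrable real random variables, let Y and m⋆ be square-integrable real random variables, and let I be a random index that is uniformly distributed on {1, …, M} and independent of the σ-algebra generated by G together with (Y, m⋆). Define M'_j = Y if j = I and M'_j = M_j otherwise. Then almost surely E[(1/M) Σ_{j=1}^{M} (M'_j − m⋆)² | G] = (1/M) E[(Y − m⋆)² | G] + (1 − 1/M) · (1/M) Σ_{j=1}^{M} E[(M_j − m⋆)² | G]. -/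
open MeasureTheory ProbabilityTheory

/-- Indicator of a measurable set is integrable w.r.t. a probability measure, with known
integral; the measurable-space argument is explicit to avoid instance shadowing. -/
private lemma aux_indicator {Ω : Type*} {m0 : MeasurableSpace Ω} {P : Measure Ω}
    [IsProbabilityMeasure P] {A : Set Ω} (hA : MeasurableSet[m0] A) :
    Integrable (A.indicator fun _ => (1:ℝ)) P ∧
      ∫ ω, A.indicator (fun _ => (1:ℝ)) ω ∂P = (P A).toReal := by
  constructor
  · exact (integrable_const (1:ℝ)).indicator hA
  · rw [integral_indicator_const (1:ℝ) hA]; simp [Measure.real]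

/-- Auxiliary: if `E[ind | H]` is a.e. the constant `c`, `f` is `H`-strongly-measurable and
`ind * f` is integrable, then `E[ind * f | G] = c * E[f | G]` a.e. for `G ≤ H`. -/
private lemma aux_condexp_mul {Ω : Type*} {m0 : MeasurableSpace Ω} {P : Measure Ω}
    [IsProbabilityMeasure P] {G H : MeasurableSpace Ω} (hGH : G ≤ H) (hH : H ≤ m0)
    {ind f : Ω → ℝ} {c : ℝ}
    (hfm : StronglyMeasurable[H] f)
    (hif : Integrable (fun ω => ind ω * f ω) P)
    (hind : Integrable ind P)
    (hcond : P[ind|H] =ᵐ[P] fun _ => c) :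
    P[fun ω => ind ω * f ω|G] =ᵐ[P] fun ω => c * (P[f|G]) ω := by
  haveI : SigmaFinite (P.trim hH) := inferInstance
  have h1 : P[f * ind|H] =ᵐ[P] f * P[ind|H] :=
    condExp_mul_of_stronglyMeasurable_left hfm (by rw [mul_comm]; exact hif) hind
  have h2 : P[fun ω => ind ω * f ω|H] =ᵐ[P] fun ω => c * f ω := by
    have heq : (fun ω => ind ω * f ω) = f * ind := by ext ω; simp [mul_comm]
    rw [heq]
    refine h1.trans ?_
    filter_upwards [hcond] with ω h
    simp [h, mul_comm]
  calc P[fun ω => ind ω * f ω|G]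
      =ᵐ[P] P[P[fun ω => ind ω * f ω|H]|G] := (condExp_condExp_of_le hGH hH).symm
    _ =ᵐ[P] P[fun ω => c * f ω|G] := condExp_congr_ae h2
    _ =ᵐ[P] fun ω => c * (P[f|G]) ω := by
        have hs : (fun ω => c * f ω) = c • f := by ext ω; simp
        rw [hs]
        refine (condExp_smul c f G).trans ?_
        filter_upwards with ω; simp

/-- the SAGA memory-update identity. -/
theorem saga_memory_update {Ω : Type*} (G : MeasurableSpace Ω) [m0 : MeasurableSpace Ω]
    (P : Measure Ω) [IsProbabilityMeasure P]
    (hG : G ≤ m0)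
    (M : ℕ) (hM : 1 ≤ M)
    (Mem : ℕ → Ω → ℝ) (hMemMeas : ∀ j, Measurable[G] (Mem j))
    (hMemL2 : ∀ j, MemLp (Mem j) 2 P)
    (Y mstar : Ω → ℝ) (hYmeas : Measurable Y) (hmstarMeas : Measurable mstar)
    (hY : MemLp Y 2 P) (hmstar : MemLp mstar 2 P)
    (I : Ω → ℕ) (hImeas : Measurable I)
    (hIunif : ∀ j ∈ Finset.Icc 1 M, P {ω | I ω = j} = 1 / M)
    (hIndep : Indep (MeasurableSpace.comap I inferInstance)
      (G ⊔ MeasurableSpace.comap (fun ω => (Y ω, mstar ω)) inferInstance) P) :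
    ∀ᵐ ω ∂P,
      (P[fun ω' => (1 / (M : ℝ)) *
          ∑ j ∈ Finset.Icc 1 M, ((if I ω' = j then Y ω' else Mem j ω') - mstar ω') ^ 2|G]) ω
        = (1 / (M : ℝ)) * (P[fun ω' => (Y ω' - mstar ω') ^ 2|G]) ω
          + (1 - 1 / (M : ℝ)) * ((1 / (M : ℝ)) *
              ∑ j ∈ Finset.Icc 1 M, (P[fun ω' => (Mem j ω' - mstar ω') ^ 2|G]) ω) := by
  classical
  have hMne : (M : ℝ) ≠ 0 := Nat.cast_ne_zero.mpr (by omega)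
  set H : MeasurableSpace Ω :=
    G ⊔ MeasurableSpace.comap (fun ω => (Y ω, mstar ω)) inferInstance with hHdef
  have hpairMeas : Measurable[m0] (fun ω => (Y ω, mstar ω)) := hYmeas.prodMk hmstarMeas
  have hH : H ≤ m0 := sup_le hG hpairMeas.comap_le
  have hGH : G ≤ H := le_sup_left
  haveI : SigmaFinite (P.trim hH) := inferInstance
  -- measurability with respect to H
  have hpairH : Measurable[H] (fun ω => (Y ω, mstar ω)) :=
    measurable_iff_comap_le.mpr le_sup_right
  have hYH : Measurable[H] Y := measurable_fst.comp hpairH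
  have hmH : Measurable[H] mstar := measurable_snd.comp hpairH
  have hfYH : StronglyMeasurable[H] (fun ω => (Y ω - mstar ω) ^ 2) :=
    ((hYH.sub hmH).pow_const 2).stronglyMeasurable
  have hfMH : ∀ j, StronglyMeasurable[H] (fun ω => (Mem j ω - mstar ω) ^ 2) := fun j =>
    ((((hMemMeas j).mono hGH le_rfl).sub hmH).pow_const 2).stronglyMeasurable
  -- integrability
  have hfYint : Integrable (fun ω => (Y ω - mstar ω) ^ 2) P := (hY.sub hmstar).integrable_sq
  have hfMint : ∀ j, Integrable (fun ω => (Mem j ω - mstar ω) ^ 2) P := fun j =>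
    ((hMemL2 j).sub hmstar).integrable_sq
  have hAmeas : ∀ j : ℕ, MeasurableSet[m0] (I ⁻¹' {j}) := fun j => hImeas (measurableSet_singleton j)
  have hindEq : ∀ j : ℕ, (fun ω => if I ω = j then (1:ℝ) else 0)
      = Set.indicator (I ⁻¹' {j}) (fun _ => 1) := by
    intro j; ext ω; simp [Set.indicator_apply, Set.mem_preimage]
  have hindInt : ∀ j : ℕ, Integrable (fun ω => if I ω = j then (1:ℝ) else 0) P := by
    intro j; rw [hindEq j]; exact (aux_indicator (P := P) (hAmeas j)).1
  have hindAE : ∀ j : ℕ, AEStronglyMeasurable[m0] (fun ω => if I ω = j then (1:ℝ) else 0) P :=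
    fun j => (hindInt j).aestronglyMeasurable
  have hindBdd : ∀ j : ℕ, ∃ C, ∀ ω, ‖if I ω = j then (1:ℝ) else 0‖ ≤ C :=
    fun j => ⟨1, fun ω => by split <;> simp⟩
  have hmul1 : ∀ j : ℕ,
      Integrable (fun ω => (if I ω = j then (1:ℝ) else 0) * (Y ω - mstar ω) ^ 2) P :=
    fun j => let ⟨_, hC⟩ := hindBdd j; hfYint.bdd_mul (hindAE j) (ae_of_all _ hC)
  have hmul2 : ∀ j : ℕ,
      Integrable (fun ω => (if I ω = j then (1:ℝ) else 0) * (Mem j ω - mstar ω) ^ 2) P :=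
    fun j => let ⟨_, hC⟩ := hindBdd j; (hfMint j).bdd_mul (hindAE j) (ae_of_all _ hC)
  -- conditional expectation of the indicator given H
  have hcond : ∀ j ∈ Finset.Icc 1 M,
      P[(fun ω => if I ω = j then (1:ℝ) else 0)|H] =ᵐ[P] fun _ => (1/(M:ℝ)) := by
    intro j hj
    have hA : MeasurableSet[MeasurableSpace.comap I inferInstance] (I ⁻¹' {j}) :=
      ⟨{j}, measurableSet_singleton j, rfl⟩
    have hSM : StronglyMeasurable[MeasurableSpace.comap I inferInstance]
        (fun ω => if I ω = j then (1:ℝ) else 0) :=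
      (Measurable.ite hA measurable_const measurable_const).stronglyMeasurable
    refine (condExp_indep_eq (μ := P) hImeas.comap_le hH hSM hIndep).trans ?_
    have hint : ∫ ω, (if I ω = j then (1:ℝ) else 0) ∂P = 1/(M:ℝ) := by
      rw [hindEq j, (aux_indicator (P := P) (hAmeas j)).2]
      have : P (I ⁻¹' {j}) = 1 / M := hIunif j hj
      rw [this]
      simp [ENNReal.toReal_div]
    rw [hint]
  -- the key per-index identity
  have key : ∀ j ∈ Finset.Icc 1 M,
      P[(fun ω => ((if I ω = j then Y ω else Mem j ω) - mstar ω) ^ 2)|G] =ᵐ[P]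
        fun ω => (1/(M:ℝ)) * (P[fun ω' => (Y ω' - mstar ω') ^ 2|G]) ω
          + (1 - 1/(M:ℝ)) * (P[fun ω' => (Mem j ω' - mstar ω') ^ 2|G]) ω := by
    intro j hj
    have hre : (fun ω => ((if I ω = j then Y ω else Mem j ω) - mstar ω) ^ 2)
        = (fun ω => (if I ω = j then (1:ℝ) else 0) * (Y ω - mstar ω) ^ 2)
          + ((fun ω => (Mem j ω - mstar ω) ^ 2)
            - fun ω => (if I ω = j then (1:ℝ) else 0) * (Mem j ω - mstar ω) ^ 2) := by
      ext ω; by_cases h : I ω = j <;> simp [h]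
    have h1 := aux_condexp_mul (P := P) hGH hH hfYH (hmul1 j) (hindInt j) (hcond j hj)
    have h2 := aux_condexp_mul (P := P) hGH hH (hfMH j) (hmul2 j) (hindInt j) (hcond j hj)
    have h3 := condExp_sub (μ := P) (m := G) (hfMint j) (hmul2 j)
    rw [hre]
    refine (condExp_add (μ := P) (m := G) (hmul1 j) ((hfMint j).sub (hmul2 j))).trans ?_
    filter_upwards [h1, h2, h3.symm.symm] with ω e1 e2 e3
    rw [Pi.add_apply, e3, Pi.sub_apply, e1, e2]
    ring
  -- integrability of each summand
  have hgint : ∀ j ∈ Finset.Icc 1 M,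
      Integrable (fun ω => ((if I ω = j then Y ω else Mem j ω) - mstar ω) ^ 2) P := by
    intro j _
    have hre : (fun ω => ((if I ω = j then Y ω else Mem j ω) - mstar ω) ^ 2)
        = (fun ω => (if I ω = j then (1:ℝ) else 0) * (Y ω - mstar ω) ^ 2)
          + ((fun ω => (Mem j ω - mstar ω) ^ 2)
            - fun ω => (if I ω = j then (1:ℝ) else 0) * (Mem j ω - mstar ω) ^ 2) := by
      ext ω; by_cases h : I ω = j <;> simp [h]
    rw [hre]
    exact (hmul1 j).add ((hfMint j).sub (hmul2 j))
  -- conditional expectation of the full sum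
  have hsum : P[(fun ω' => (1/(M:ℝ)) *
        ∑ j ∈ Finset.Icc 1 M, ((if I ω' = j then Y ω' else Mem j ω') - mstar ω') ^ 2)|G]
      =ᵐ[P] (1/(M:ℝ)) • ∑ j ∈ Finset.Icc 1 M,
        P[(fun ω => ((if I ω = j then Y ω else Mem j ω) - mstar ω) ^ 2)|G] := by
    have hfun : (fun ω' => (1/(M:ℝ)) *
          ∑ j ∈ Finset.Icc 1 M, ((if I ω' = j then Y ω' else Mem j ω') - mstar ω') ^ 2)
        = (1/(M:ℝ)) • ∑ j ∈ Finset.Icc 1 M,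
            (fun ω => ((if I ω = j then Y ω else Mem j ω) - mstar ω) ^ 2) := by
      ext ω; simp [Finset.sum_apply]
    rw [hfun]
    exact (condExp_smul (μ := P) (m := G) (1/(M:ℝ)) _).trans
      ((condExp_finset_sum (μ := P) (m := G) hgint).const_smul (1/(M:ℝ)))
  have hall : ∀ᵐ ω ∂P, ∀ j ∈ Finset.Icc 1 M,
      (P[(fun ω' => ((if I ω' = j then Y ω' else Mem j ω') - mstar ω') ^ 2)|G]) ω
        = (1/(M:ℝ)) * (P[fun ω' => (Y ω' - mstar ω') ^ 2|G]) ω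
          + (1 - 1/(M:ℝ)) * (P[fun ω' => (Mem j ω' - mstar ω') ^ 2|G]) ω := by
    rw [Filter.eventually_all_finset]
    exact key
  filter_upwards [hsum, hall] with ω h1 h2
  rw [h1]
  simp only [Pi.smul_apply, Finset.sum_apply, smul_eq_mul]
  rw [Finset.sum_congr rfl h2, Finset.sum_add_distrib, Finset.sum_const, ← Finset.mul_sum,
    Nat.card_Icc, Nat.add_sub_cancel, nsmul_eq_mul]
  field_simp
end

section
/- Let (Ω, F, (F_n)_{n≥0}, P) be a filtered probability space. Let (e_n)_{n≥0} be an adapted sequence of nonnegative integrable real random variables, (A_n)_{n≥0} events with A_n ∈ F_n, and (γ_n)_{n≥0} nonnegative F_n-measurable random variables. Let L > 0, B > 0, C > 0 be constants. Assume that for every n, almost surely E[e_{n+1} | F_n] ≤ e_n + 1_{A_n}( −(2Lγ_n − Bγ_n²) e_n + Cγ_n² ), that Σ_{n≥0} γ_n² < ∞ almost surely, and that Σ_{n≥0} 1_{A_n} γ_n = +∞ almost surely. Then e_n → 0 almost surely as n → ∞. -/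
open MeasureTheory Filter

open Finset in
private lemma error_aux {Ω : Type*} [m0 : MeasurableSpace Ω]
    (P : Measure Ω) [IsProbabilityMeasure P]
    (F : Filtration ℕ m0)
    (e : ℕ → Ω → ℝ) (hadapted : Adapted F e)
    (hint : ∀ n, Integrable (e n) P)
    (hnonneg : ∀ n, ∀ᵐ ω ∂P, 0 ≤ e n ω)
    (A : ℕ → Set Ω) (hA : ∀ n, MeasurableSet[F n] (A n))
    (γ : ℕ → Ω → ℝ) (hγmeas : ∀ n, Measurable[F n] (γ n))
    (hγnonneg : ∀ n, ∀ᵐ ω ∂P, 0 ≤ γ n ω)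
    (L B C : ℝ) (hL : 0 < L) (hB : 0 < B) (hC : 0 < C)
    (hstep : ∀ n, ∀ᵐ ω ∂P,
      (P[e (n + 1)|F n]) ω ≤ e n ω +
        (A n).indicator
          (fun ω' => -(2 * L * γ n ω' - B * (γ n ω') ^ 2) * e n ω' + C * (γ n ω') ^ 2) ω)
    (hdiv : ∀ᵐ ω ∂P,
      Tendsto (fun N => ∑ n ∈ Finset.range N, (A n).indicator (γ n) ω) atTop atTop)
    (M : ℝ) (hM : 0 ≤ M) :
    ∀ᵐ ω ∂P, (∀ n, ∑ j ∈ Finset.range (n + 1), (γ j ω) ^ 2 ≤ M) →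
      Tendsto (fun n => e n ω) atTop (nhds 0) := by
  classical
  -- the sets S n
  set S : ℕ → Set Ω := fun n => {ω | ∑ j ∈ range (n + 1), (γ j ω) ^ 2 ≤ M} with hS
  have hγm0 : ∀ n m, n ≤ m → Measurable[F m] (γ n) :=
    fun n m h => (hγmeas n).mono (F.mono h) le_rfl
  have hSmeas : ∀ n, MeasurableSet[F n] (S n) := by
    intro n
    have : Measurable[F n] (fun ω => ∑ j ∈ range (n + 1), (γ j ω) ^ 2) := by
      apply Finset.measurable_sum
      intro j hj
      exact ((hγm0 j n (Nat.lt_succ_iff.mp (mem_range.mp hj))).pow_const 2)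
    exact measurableSet_le this measurable_const
  have hSmono : ∀ n, S (n + 1) ⊆ S n := by
    intro n ω hω
    simp only [hS, Set.mem_setOf_eq] at hω ⊢
    refine le_trans ?_ hω
    exact Finset.sum_le_sum_of_subset_of_nonneg
      (Finset.range_subset_range.mpr (by omega)) (fun i _ _ => sq_nonneg _)
  -- the stopped process f
  set f : ℕ → Ω → ℝ :=
    fun n => Nat.rec (e 0) (fun k fk => (S k).piecewise (e (k + 1)) fk) n with hf
  have hf0 : f 0 = e 0 := rfl
  have hfsucc : ∀ n, f (n + 1) = (S n).piecewise (e (n + 1)) (f n) := fun n => rfl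
  have hfe : ∀ n ω, ω ∈ S n → f n ω = e n ω := by
    intro n ω hω
    cases n with
    | zero => rfl
    | succ k =>
      rw [hfsucc k]
      exact Set.piecewise_eq_of_mem _ _ _ (hSmono k hω)
  have hfmeas : ∀ n, StronglyMeasurable[F n] (f n) := by
    intro n
    induction n with
    | zero => exact (hadapted 0).stronglyMeasurable
    | succ k ih =>
      rw [hfsucc k]
      exact StronglyMeasurable.piecewise (F.mono (Nat.le_succ k) _ (hSmeas k)) (hadapted (k + 1)).stronglyMeasurable
        (ih.mono (F.mono (Nat.le_succ k)))
  have hfint : ∀ n, Integrable (f n) P := by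
    intro n
    induction n with
    | zero => exact hint 0
    | succ k ih =>
      rw [hfsucc k]
      exact Integrable.piecewise (F.le k _ (hSmeas k))
        (hint (k + 1)).integrableOn ih.integrableOn
  -- a.e. nonnegativity of f
  have hfnonneg : ∀ᵐ ω ∂P, ∀ n, 0 ≤ f n ω := by
    have := ae_all_iff.mpr hnonneg
    filter_upwards [this] with ω hω
    intro n
    induction n with
    | zero => exact hω 0
    | succ k ih =>
      rw [hfsucc k]
      by_cases h : ω ∈ S k
      · rw [Set.piecewise_eq_of_mem _ _ _ h]; exact hω (k + 1)
      · rw [Set.piecewise_eq_of_notMem _ _ _ h]; exact ih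
  -- the truncated rates δ
  set δ : ℕ → Ω → ℝ := fun n => (A n ∩ S n).indicator (γ n) with hδ
  have hδmeas : ∀ n m, n ≤ m → Measurable[F m] (δ n) := by
    intro n m h
    exact Measurable.indicator (hγm0 n m h)
      (F.mono h _ ((hA n).inter (hSmeas n)))
  have hδsq_le_γsq : ∀ n ω, (δ n ω) ^ 2 ≤ (γ n ω) ^ 2 := by
    intro n ω
    by_cases h : ω ∈ A n ∩ S n
    · rw [hδ]; simp only [Set.indicator_of_mem h]; exact le_rfl
    · rw [hδ]; simp only [Set.indicator_of_notMem h]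
      simpa using sq_nonneg (γ n ω)
  have hδsum : ∀ n ω, ∑ k ∈ range n, (δ k ω) ^ 2 ≤ M := by
    intro n ω
    induction n with
    | zero => simpa using hM
    | succ k ih =>
      by_cases h : ω ∈ S k
      · calc ∑ j ∈ range (k + 1), (δ j ω) ^ 2
            ≤ ∑ j ∈ range (k + 1), (γ j ω) ^ 2 :=
              Finset.sum_le_sum fun j _ => hδsq_le_γsq j ω
          _ ≤ M := h
      · have hz : δ k ω = 0 := by
          rw [hδ]; exact Set.indicator_of_notMem (fun hm => h hm.2) _
        rw [Finset.sum_range_succ, hz]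
        simpa using ih
  have hδsq_le : ∀ n ω, (δ n ω) ^ 2 ≤ M := by
    intro n ω
    have := hδsum (n + 1) ω
    rw [Finset.sum_range_succ] at this
    have h0 : (0:ℝ) ≤ ∑ k ∈ range n, (δ k ω) ^ 2 :=
      Finset.sum_nonneg fun k _ => sq_nonneg _
    linarith
  have hδabs : ∀ n ω, |δ n ω| ≤ Real.sqrt M := by
    intro n ω
    rw [← Real.sqrt_sq_eq_abs]
    exact Real.sqrt_le_sqrt (hδsq_le n ω)
  have hδnonneg : ∀ᵐ ω ∂P, ∀ n, 0 ≤ δ n ω := by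
    filter_upwards [ae_all_iff.mpr hγnonneg] with ω hω n
    rw [hδ]
    exact Set.indicator_nonneg (fun _ _ => hω n) ω
  -- the products Π and their inverses c
  set PP : ℕ → Ω → ℝ := fun n ω => ∏ k ∈ range n, (1 + B * (δ k ω) ^ 2) with hPi
  have hPi_one_le : ∀ n ω, 1 ≤ PP n ω := by
    intro n ω
    show (1:ℝ) ≤ ∏ k ∈ range n, (1 + B * (δ k ω) ^ 2)
    calc (1:ℝ) = ∏ _k ∈ range n, (1:ℝ) := by simp
      _ ≤ ∏ k ∈ range n, (1 + B * (δ k ω) ^ 2) :=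
        Finset.prod_le_prod (fun k _ => by norm_num)
          (fun k _ => by nlinarith [sq_nonneg (δ k ω)])
  have hPi_pos : ∀ n ω, 0 < PP n ω := fun n ω => lt_of_lt_of_le one_pos (hPi_one_le n ω)
  have hPi_le : ∀ n ω, PP n ω ≤ Real.exp (B * M) := by
    intro n ω
    calc PP n ω ≤ ∏ k ∈ range n, Real.exp (B * (δ k ω) ^ 2) := by
          apply Finset.prod_le_prod
          · intro k _; nlinarith [sq_nonneg (δ k ω)]
          · intro k _
            have := Real.add_one_le_exp (B * (δ k ω) ^ 2)
            linarith
      _ = Real.exp (∑ k ∈ range n, B * (δ k ω) ^ 2) := (Real.exp_sum _ _).symm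
      _ ≤ Real.exp (B * M) := by
          apply Real.exp_le_exp.mpr
          rw [← Finset.mul_sum]
          exact mul_le_mul_of_nonneg_left (hδsum n ω) hB.le
  have hPi_succ : ∀ n ω, PP (n + 1) ω = PP n ω * (1 + B * (δ n ω) ^ 2) :=
    fun n ω => Finset.prod_range_succ _ _
  have hPi_mono : ∀ ω, Monotone fun n => PP n ω := by
    intro ω
    apply monotone_nat_of_le_succ
    intro n
    rw [hPi_succ]
    nlinarith [mul_nonneg (mul_nonneg hB.le (sq_nonneg (δ n ω))) (hPi_pos n ω).le]
  set c : ℕ → Ω → ℝ := fun n ω => (PP n ω)⁻¹ with hc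
  have hc_pos : ∀ n ω, 0 < c n ω := fun n ω => inv_pos.mpr (hPi_pos n ω)
  have hc_le_one : ∀ n ω, c n ω ≤ 1 := fun n ω => inv_le_one_of_one_le₀ (hPi_one_le n ω)
  have hc_ge : ∀ n ω, Real.exp (-(B * M)) ≤ c n ω := by
    intro n ω
    rw [Real.exp_neg]
    exact inv_anti₀ (hPi_pos n ω) (hPi_le n ω)
  have hcmeas : ∀ k m, k ≤ m + 1 → Measurable[F m] (c k) := by
    intro k m h
    apply Measurable.inv
    apply Finset.measurable_prod
    intro j hj
    have hjm : j ≤ m := by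
      have := mem_range.mp hj; omega
    exact (measurable_const.add
      (measurable_const.mul ((hδmeas j m hjm).pow_const 2)))
  -- the summands g of the compensator
  set g : ℕ → Ω → ℝ :=
    fun k ω => c (k + 1) ω * (2 * L * δ k ω * f k ω - C * (δ k ω) ^ 2) with hg
  have hgmeas : ∀ k m, k ≤ m → StronglyMeasurable[F m] (g k) := by
    intro k m h
    apply Measurable.stronglyMeasurable
    have h1 : Measurable[F m] (c (k + 1)) := hcmeas (k + 1) m (by omega)
    have h2 : Measurable[F m] (δ k) := hδmeas k m h
    have h3 : Measurable[F m] (f k) := ((hfmeas k).mono (F.mono h)).measurable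
    exact h1.mul (((measurable_const.mul h2).mul h3).sub
      (measurable_const.mul (h2.pow_const 2)))
  have hgbound : ∀ k ω, ‖g k ω‖ ≤ 2 * L * Real.sqrt M * ‖f k ω‖ + C * M := by
    intro k ω
    have h1 : |c (k + 1) ω| ≤ 1 := by
      rw [abs_of_pos (hc_pos _ _)]; exact hc_le_one _ _
    have h3 : |2 * L * δ k ω * f k ω| ≤ 2 * L * Real.sqrt M * |f k ω| := by
      rw [abs_mul, abs_mul, abs_of_pos (by linarith : (0:ℝ) < 2 * L)]
      have := hδabs k ω
      have h4 : (0:ℝ) ≤ 2 * L := by linarith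
      exact mul_le_mul_of_nonneg_right (mul_le_mul_of_nonneg_left this h4) (abs_nonneg _)
    have h5 : |C * (δ k ω) ^ 2| ≤ C * M := by
      rw [abs_of_nonneg (by positivity)]
      exact mul_le_mul_of_nonneg_left (hδsq_le k ω) hC.le
    have h6 := abs_add_le (2 * L * δ k ω * f k ω) (-(C * (δ k ω) ^ 2))
    rw [abs_neg] at h6
    have h7 : ‖g k ω‖ = |c (k + 1) ω| * |2 * L * δ k ω * f k ω - C * (δ k ω) ^ 2| := by
      rw [hg]; simp only [Real.norm_eq_abs, abs_mul]
    rw [h7, Real.norm_eq_abs]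
    have h8 : |2 * L * δ k ω * f k ω - C * (δ k ω) ^ 2| ≤
        2 * L * Real.sqrt M * |f k ω| + C * M := by
      rw [sub_eq_add_neg]
      exact h6.trans (by linarith)
    calc |c (k + 1) ω| * |2 * L * δ k ω * f k ω - C * (δ k ω) ^ 2|
        ≤ 1 * (2 * L * Real.sqrt M * |f k ω| + C * M) :=
          mul_le_mul h1 h8 (abs_nonneg _) zero_le_one
      _ = 2 * L * Real.sqrt M * |f k ω| + C * M := one_mul _
  have hgint : ∀ k, Integrable (g k) P := by
    intro k
    refine Integrable.mono' (g := fun ω => 2 * L * Real.sqrt M * ‖f k ω‖ + C * M)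
      ((((hfint k).norm).const_mul _).add (integrable_const _))
      (((hgmeas k k le_rfl).mono (F.le k)).aestronglyMeasurable)
      (Eventually.of_forall (hgbound k))
  -- the supermartingale Y
  set Y : ℕ → Ω → ℝ := fun n ω => c n ω * f n ω + ∑ k ∈ range n, g k ω with hY
  have hcfmeas : ∀ n, StronglyMeasurable[F n] (fun ω => c n ω * f n ω) := fun n =>
    ((hcmeas n n (by omega)).mul (hfmeas n).measurable).stronglyMeasurable
  have hYadapted : StronglyAdapted F Y := by
    intro n
    show StronglyMeasurable[F n] fun ω => c n ω * f n ω + ∑ k ∈ range n, g k ω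
    exact (hcfmeas n).add
      (Finset.stronglyMeasurable_fun_sum _ fun k hk =>
        hgmeas k n (by have := Finset.mem_range.mp hk; omega))
  have hcfint : ∀ n, Integrable (fun ω => c n ω * f n ω) P := by
    intro n
    refine Integrable.bdd_mul (c := 1) (hfint n)
      (((hcmeas n n (by omega)).mono (F.le n) le_rfl).stronglyMeasurable).aestronglyMeasurable
      (Eventually.of_forall fun ω => ?_)
    rw [Real.norm_eq_abs, abs_of_pos (hc_pos n ω)]
    exact hc_le_one n ω
  have hYint : ∀ n, Integrable (Y n) P := fun n =>
    (hcfint n).add (integrable_finset_sum _ fun k _ => hgint k)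
  -- the key one-step inequality for the stopped process
  have key : ∀ n, ∀ᵐ ω ∂P, (P[f (n + 1)|F n]) ω ≤
      (1 + B * (δ n ω) ^ 2) * f n ω - 2 * L * δ n ω * f n ω + C * (δ n ω) ^ 2 := by
    intro n
    have hsplit : f (n + 1) = (S n).indicator (e (n + 1)) + (S n)ᶜ.indicator (f n) := by
      funext ω
      by_cases h : ω ∈ S n
      · simp [hfsucc n, Set.piecewise, Set.indicator, h]
      · simp [hfsucc n, Set.piecewise, Set.indicator, h]
    have hint1 : Integrable ((S n).indicator (e (n + 1))) P :=
      (hint (n + 1)).indicator (F.le n _ (hSmeas n))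
    have hint2 : Integrable ((S n)ᶜ.indicator (f n)) P :=
      (hfint n).indicator (F.le n _ (hSmeas n).compl)
    have hcond : P[f (n + 1)|F n] =ᵐ[P]
        (S n).indicator (P[e (n + 1)|F n]) + (S n)ᶜ.indicator (f n) := by
      rw [hsplit]
      refine (condExp_add hint1 hint2 (F n)).trans ?_
      exact EventuallyEq.add (condExp_indicator (hint (n + 1)) (hSmeas n))
        (EventuallyEq.of_eq (condExp_of_stronglyMeasurable (F.le n)
          ((hfmeas n).indicator (hSmeas n).compl) hint2))
    filter_upwards [hcond, hstep n] with ω hceq hsω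
    rw [hceq]
    simp only [Pi.add_apply]
    by_cases hs : ω ∈ S n
    · rw [Set.indicator_of_mem hs, Set.indicator_of_notMem (by simp [hs] : ω ∉ (S n)ᶜ),
        add_zero]
      have hfe_n : f n ω = e n ω := hfe n ω hs
      by_cases ha : ω ∈ A n
      · have hδω : δ n ω = γ n ω := by rw [hδ]; exact Set.indicator_of_mem (Set.mem_inter ha hs) _
        rw [Set.indicator_of_mem ha] at hsω
        rw [hδω, hfe_n]
        exact hsω.trans (le_of_eq (by ring))
      · have hδω : δ n ω = 0 := by
          rw [hδ]; exact Set.indicator_of_notMem (fun hm => ha hm.1) _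
        rw [Set.indicator_of_notMem ha] at hsω
        rw [hδω, hfe_n]
        exact hsω.trans (le_of_eq (by ring))
    · rw [Set.indicator_of_notMem hs, Set.indicator_of_mem (Set.mem_compl hs)]
      have hδω : δ n ω = 0 := by
        rw [hδ]; exact Set.indicator_of_notMem (fun hm => hs hm.2) _
      rw [hδω]
      exact le_of_eq (by ring)
  -- Y is a supermartingale
  have hone : ∀ n ω, (1 + B * (δ n ω) ^ 2) ≠ 0 := by
    intro n ω; nlinarith [sq_nonneg (δ n ω)]
  have hcc : ∀ n ω, c (n + 1) ω * (1 + B * (δ n ω) ^ 2) = c n ω := by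
    intro n ω
    show (PP (n + 1) ω)⁻¹ * (1 + B * (δ n ω) ^ 2) = (PP n ω)⁻¹
    rw [hPi_succ n ω, mul_inv, mul_assoc, inv_mul_cancel₀ (hone n ω), mul_one]
  have hsuper : Supermartingale Y F P := by
    refine supermartingale_nat hYadapted hYint (fun n => ?_)
    have hT : Integrable (fun ω => ∑ k ∈ range (n + 1), g k ω) P :=
      integrable_finset_sum _ fun k _ => hgint k
    have hTmeas : StronglyMeasurable[F n] (fun ω => ∑ k ∈ range (n + 1), g k ω) :=
      Finset.stronglyMeasurable_fun_sum _ fun k hk =>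
        hgmeas k n (by have := Finset.mem_range.mp hk; omega)
    have hcf1 : Integrable (fun ω => c (n + 1) ω * f (n + 1) ω) P := hcfint (n + 1)
    have hYeq : Y (n + 1) = (fun ω => c (n + 1) ω * f (n + 1) ω) +
        (fun ω => ∑ k ∈ range (n + 1), g k ω) := rfl
    have hpull : P[c (n + 1) * f (n + 1)|F n] =ᵐ[P] c (n + 1) * P[f (n + 1)|F n] :=
      condExp_mul_of_stronglyMeasurable_left
        ((hcmeas (n + 1) n le_rfl).stronglyMeasurable) hcf1 (hfint (n + 1))
    have hYc : P[Y (n + 1)|F n] =ᵐ[P]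
        c (n + 1) * P[f (n + 1)|F n] + (fun ω => ∑ k ∈ range (n + 1), g k ω) := by
      have h1 : P[Y (n + 1)|F n] =ᵐ[P] P[fun ω => c (n + 1) ω * f (n + 1) ω|F n] +
          P[fun ω => ∑ k ∈ range (n + 1), g k ω|F n] := by
        rw [hYeq]; exact condExp_add hcf1 hT (F n)
      refine h1.trans (EventuallyEq.add hpull (EventuallyEq.of_eq
        (condExp_of_stronglyMeasurable (F.le n) hTmeas hT)))
    filter_upwards [hYc, key n] with ω hYω hkω
    rw [hYω]
    simp only [Pi.add_apply, Pi.mul_apply]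
    have hstep2 : c (n + 1) ω * (P[f (n + 1)|F n]) ω ≤
        c (n + 1) ω * ((1 + B * (δ n ω) ^ 2) * f n ω - 2 * L * δ n ω * f n ω
          + C * (δ n ω) ^ 2) :=
      mul_le_mul_of_nonneg_left hkω (hc_pos _ _).le
    have hsum : ∑ k ∈ range (n + 1), g k ω = ∑ k ∈ range n, g k ω + g n ω :=
      Finset.sum_range_succ _ _
    have hgn : g n ω = c (n + 1) ω * (2 * L * δ n ω * f n ω - C * (δ n ω) ^ 2) := rfl
    calc c (n + 1) ω * (P[f (n + 1)|F n]) ω + ∑ k ∈ range (n + 1), g k ω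
        ≤ c (n + 1) ω * ((1 + B * (δ n ω) ^ 2) * f n ω - 2 * L * δ n ω * f n ω
            + C * (δ n ω) ^ 2) + ∑ k ∈ range (n + 1), g k ω := by linarith
      _ = c n ω * f n ω + ∑ k ∈ range n, g k ω := by
          rw [hsum, hgn]
          linear_combination (f n ω) * hcc n ω
      _ = Y n ω := rfl
  -- lower bound for Y
  have hYlb : ∀ᵐ ω ∂P, ∀ n, -(C * M) ≤ Y n ω := by
    filter_upwards [hfnonneg, hδnonneg] with ω hfω hδω
    intro n
    have hterm : ∀ k ∈ range n, -(C * (δ k ω) ^ 2) ≤ g k ω := by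
      intro k _
      show -(C * (δ k ω) ^ 2) ≤ c (k + 1) ω * (2 * L * δ k ω * f k ω - C * (δ k ω) ^ 2)
      have h1 : (0:ℝ) ≤ c (k + 1) ω * (2 * L * δ k ω * f k ω) :=
        mul_nonneg (hc_pos _ _).le
          (mul_nonneg (mul_nonneg (by linarith) (hδω k)) (hfω k))
      have h2 : c (k + 1) ω * (C * (δ k ω) ^ 2) ≤ 1 * (C * (δ k ω) ^ 2) :=
        mul_le_mul_of_nonneg_right (hc_le_one _ _) (by positivity)
      nlinarith
    have h1 : ∑ k ∈ range n, -(C * (δ k ω) ^ 2) ≤ ∑ k ∈ range n, g k ω :=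
      Finset.sum_le_sum hterm
    have h2 : ∑ k ∈ range n, -(C * (δ k ω) ^ 2) = -(C * ∑ k ∈ range n, (δ k ω) ^ 2) := by
      rw [Finset.sum_neg_distrib, ← Finset.mul_sum]
    have h3 : C * ∑ k ∈ range n, (δ k ω) ^ 2 ≤ C * M :=
      mul_le_mul_of_nonneg_left (hδsum n ω) hC.le
    have hcf : 0 ≤ c n ω * f n ω := mul_nonneg (hc_pos n ω).le (hfω n)
    show -(C * M) ≤ c n ω * f n ω + ∑ k ∈ range n, g k ω
    linarith
  -- L¹ bound for Y
  have habs : ∀ n, ∀ᵐ ω ∂P, ‖Y n ω‖ ≤ Y n ω + 2 * (C * M) := by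
    intro n
    filter_upwards [hYlb] with ω hω
    have h := hω n
    rw [Real.norm_eq_abs]
    rcases abs_cases (Y n ω) with ⟨h1, _⟩ | ⟨h1, _⟩ <;> nlinarith [mul_nonneg hC.le hM]
  have hEY : ∀ n, ∫ ω, Y n ω ∂P ≤ ∫ ω, e 0 ω ∂P := by
    intro n
    have h := hsuper.2.1 0 n (Nat.zero_le n)
    calc ∫ ω, Y n ω ∂P = ∫ ω, (P[Y n|F 0]) ω ∂P :=
          (integral_condExp (F.le 0)).symm
      _ ≤ ∫ ω, Y 0 ω ∂P := integral_mono_ae integrable_condExp (hYint 0) h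
      _ = ∫ ω, e 0 ω ∂P := by
          refine integral_congr_ae (Eventually.of_forall (fun ω => ?_))
          show c 0 ω * f 0 ω + ∑ k ∈ range 0, g k ω = e 0 ω
          have h1 : c 0 ω = 1 := by
            show (PP 0 ω)⁻¹ = 1
            rw [show PP 0 ω = 1 from Finset.prod_range_zero _, inv_one]
          have h2 : f 0 ω = e 0 ω := rfl
          rw [Finset.sum_range_zero, add_zero, h1, h2, one_mul]
  have hIbound : ∀ n, ∫ ω, ‖Y n ω‖ ∂P ≤ ∫ ω, e 0 ω ∂P + 2 * (C * M) := by
    intro n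
    have h1 : ∫ ω, ‖Y n ω‖ ∂P ≤ ∫ ω, (Y n ω + 2 * (C * M)) ∂P :=
      integral_mono_ae (hYint n).norm ((hYint n).add (integrable_const _)) (habs n)
    have h2 : ∫ ω, (Y n ω + 2 * (C * M)) ∂P = ∫ ω, Y n ω ∂P + 2 * (C * M) := by
      rw [integral_add (hYint n) (integrable_const _), integral_const]
      simp
    linarith [hEY n]
  have hbdd2 : ∀ n, eLpNorm (Y n) 1 P ≤ ENNReal.ofReal (∫ ω, e 0 ω ∂P + 2 * (C * M)) := by
    intro n
    rw [eLpNorm_one_eq_lintegral_enorm, ← ofReal_integral_norm_eq_lintegral_enorm (hYint n)]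
    exact ENNReal.ofReal_le_ofReal (hIbound n)
  -- a.e. convergence of Y
  have hconv : ∀ᵐ ω ∂P, ∃ l, Tendsto (fun n => Y n ω) atTop (nhds l) := by
    have hsub : Submartingale (-Y) F P := hsuper.neg
    have hbdd' : ∀ n, eLpNorm ((-Y) n) 1 P ≤
        (∫ ω, e 0 ω ∂P + 2 * (C * M)).toNNReal := by
      intro n
      have h0 : (-Y) n = -(Y n) := rfl
      rw [h0, eLpNorm_neg]
      exact hbdd2 n
    filter_upwards [hsub.exists_ae_tendsto_of_bdd hbdd'] with ω hl
    obtain ⟨l, hl⟩ := hl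
    exact ⟨-l, by simpa using hl.neg⟩
  -- endgame: pointwise analysis
  filter_upwards [hconv, hfnonneg, hδnonneg, hdiv, ae_all_iff.mpr hnonneg]
    with ω hYconv hfω hδω hdivω heω
  intro hG
  have hSω : ∀ n, ω ∈ S n := fun n => hG n
  have hfeω : ∀ n, f n ω = e n ω := fun n => hfe n ω (hSω n)
  have hδind : ∀ k, δ k ω = (A k).indicator (γ k) ω := by
    intro k
    by_cases h : ω ∈ A k
    · have h1 : δ k ω = γ k ω :=
        Set.indicator_of_mem (Set.mem_inter h (hSω k)) _
      rw [h1, Set.indicator_of_mem h]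
    · have h1 : δ k ω = 0 :=
        Set.indicator_of_notMem (fun hm => h (Set.mem_of_mem_inter_left hm)) _
      rw [h1, Set.indicator_of_notMem h]
  obtain ⟨y, hy⟩ := hYconv
  set b : ℕ → ℝ := fun k => c (k + 1) ω * (C * (δ k ω) ^ 2) with hb
  set a : ℕ → ℝ := fun k => c (k + 1) ω * (2 * L * δ k ω * f k ω) with ha
  have hgab : ∀ k, g k ω = a k - b k := fun k => by
    show c (k + 1) ω * (2 * L * δ k ω * f k ω - C * (δ k ω) ^ 2) = _ - _
    rw [hb, ha]; ring
  have hYdecomp : ∀ n, Y n ω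
      = c n ω * f n ω + (∑ k ∈ range n, a k) - (∑ k ∈ range n, b k) := by
    intro n
    show c n ω * f n ω + ∑ k ∈ range n, g k ω = _
    rw [show ∑ k ∈ range n, g k ω = ∑ k ∈ range n, (a k - b k) from
      Finset.sum_congr rfl (fun k _ => hgab k), Finset.sum_sub_distrib]
    ring
  have hanonneg : ∀ k, 0 ≤ a k := fun k =>
    mul_nonneg (hc_pos _ _).le
      (mul_nonneg (mul_nonneg (by linarith) (hδω k)) (hfω k))
  have hbnonneg : ∀ k, 0 ≤ b k := fun k =>
    mul_nonneg (hc_pos _ _).le (mul_nonneg hC.le (sq_nonneg _))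
  have hbbd : ∀ n, ∑ k ∈ range n, b k ≤ C * M := by
    intro n
    calc ∑ k ∈ range n, b k ≤ ∑ k ∈ range n, C * (δ k ω) ^ 2 := by
          refine Finset.sum_le_sum (fun k _ => ?_)
          show c (k + 1) ω * (C * (δ k ω) ^ 2) ≤ C * (δ k ω) ^ 2
          have h1 : (0:ℝ) ≤ C * (δ k ω) ^ 2 := by positivity
          nlinarith [hc_le_one (k + 1) ω, hc_pos (k + 1) ω]
      _ = C * ∑ k ∈ range n, (δ k ω) ^ 2 := (Finset.mul_sum _ _ _).symm
      _ ≤ C * M := mul_le_mul_of_nonneg_left (hδsum n ω) hC.le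
  have hbmono : Monotone (fun n => ∑ k ∈ range n, b k) :=
    monotone_nat_of_le_succ (fun n => by
      rw [Finset.sum_range_succ]; linarith [hbnonneg n])
  obtain ⟨ub, hub⟩ : ∃ ub, Tendsto (fun n => ∑ k ∈ range n, b k) atTop (nhds ub) :=
    ⟨_, tendsto_atTop_ciSup hbmono ⟨C * M, by rintro x ⟨n, rfl⟩; exact hbbd n⟩⟩
  have hWconv : Tendsto (fun n => c n ω * f n ω + ∑ k ∈ range n, a k) atTop
      (nhds (y + ub)) := by
    have heq : (fun n => c n ω * f n ω + ∑ k ∈ range n, a k)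
        = fun n => Y n ω + ∑ k ∈ range n, b k := by
      funext n; rw [hYdecomp n]; ring
    rw [heq]
    exact hy.add hub
  have haub : BddAbove (Set.range (fun n => ∑ k ∈ range n, a k)) := by
    obtain ⟨Kw, hKw⟩ := hWconv.bddAbove_range
    refine ⟨Kw, ?_⟩
    rintro x ⟨n, rfl⟩
    have h1 : ∑ k ∈ range n, a k ≤ c n ω * f n ω + ∑ k ∈ range n, a k := by
      have := mul_nonneg (hc_pos n ω).le (hfω n); linarith
    exact h1.trans (hKw (Set.mem_range_self n))
  have hamono : Monotone (fun n => ∑ k ∈ range n, a k) :=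
    monotone_nat_of_le_succ (fun n => by
      rw [Finset.sum_range_succ]; linarith [hanonneg n])
  obtain ⟨ua, hua⟩ : ∃ ua, Tendsto (fun n => ∑ k ∈ range n, a k) atTop (nhds ua) :=
    ⟨_, tendsto_atTop_ciSup hamono haub⟩
  have hcfconv : Tendsto (fun n => c n ω * f n ω) atTop (nhds (y + ub - ua)) := by
    have heq : (fun n => c n ω * f n ω)
        = fun n => (c n ω * f n ω + ∑ k ∈ range n, a k) - ∑ k ∈ range n, a k := by
      funext n; ring
    rw [heq]
    exact hWconv.sub hua
  obtain ⟨p, hp⟩ : ∃ p, Tendsto (fun n => PP n ω) atTop (nhds p) :=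
    ⟨_, tendsto_atTop_ciSup (hPi_mono ω)
      ⟨Real.exp (B * M), by rintro x ⟨n, rfl⟩; exact hPi_le n ω⟩⟩
  have hp1 : 1 ≤ p := ge_of_tendsto' hp (fun n => hPi_one_le n ω)
  have hfconv : Tendsto (fun n => f n ω) atTop (nhds ((y + ub - ua) * p)) := by
    have heq : ∀ n, f n ω = (c n ω * f n ω) * PP n ω := by
      intro n
      have h0 : PP n ω ≠ 0 := (hPi_pos n ω).ne'
      show f n ω = ((PP n ω)⁻¹ * f n ω) * PP n ω
      field_simp
    rw [show (fun n => f n ω) = fun n => (c n ω * f n ω) * PP n ω from funext heq]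
    exact hcfconv.mul hp
  have heconv : Tendsto (fun n => e n ω) atTop (nhds ((y + ub - ua) * p)) := by
    rw [show (fun n => e n ω) = fun n => f n ω from funext (fun n => (hfeω n).symm)]
    exact hfconv
  set l := (y + ub - ua) * p with hldef
  have hl0 : 0 ≤ l := ge_of_tendsto' heconv (fun n => heω n)
  rcases eq_or_lt_of_le hl0 with hl0' | hlpos
  · rwa [← hl0'] at heconv
  · exfalso
    have hev : ∀ᶠ n in atTop, l / 2 < e n ω :=
      heconv.eventually (eventually_gt_nhds (half_lt_self hlpos))
    obtain ⟨N, hN⟩ := eventually_atTop.mp hev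
    have haup : ∀ n, ∑ k ∈ range n, a k ≤ ua := fun n => hamono.ge_of_tendsto hua n
    set D := Real.exp (-(B * M)) * (2 * L) * (l / 2) with hD
    have hDpos : 0 < D :=
      mul_pos (mul_pos (Real.exp_pos _) (by linarith)) (half_pos hlpos)
    have hkey : ∀ n, N ≤ n → ∑ k ∈ range n, (A k).indicator (γ k) ω ≤
        ∑ k ∈ range N, (A k).indicator (γ k) ω + ua / D := by
      intro n hn
      have h1 : ∀ k, N ≤ k → D * δ k ω ≤ a k := by
        intro k hk
        have he2 : l / 2 ≤ e k ω := (hN k hk).le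
        show D * δ k ω ≤ c (k + 1) ω * (2 * L * δ k ω * f k ω)
        rw [hfeω k]
        have h2 : Real.exp (-(B * M)) ≤ c (k + 1) ω := hc_ge (k + 1) ω
        have h3 : 0 ≤ δ k ω := hδω k
        have h5 : Real.exp (-(B * M)) * (l / 2) ≤ c (k + 1) ω * e k ω :=
          mul_le_mul h2 he2 (half_pos hlpos).le
            ((Real.exp_pos _).le.trans h2)
        have h6 := mul_le_mul_of_nonneg_right h5
          (mul_nonneg (by linarith : (0:ℝ) ≤ 2 * L) h3)
        nlinarith [h6]
      have h7 : D * ∑ k ∈ Finset.Ico N n, δ k ω ≤ ∑ k ∈ Finset.Ico N n, a k := by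
        rw [Finset.mul_sum]
        exact Finset.sum_le_sum (fun k hk => h1 k (Finset.mem_Ico.mp hk).1)
      have h8 : ∑ k ∈ Finset.Ico N n, a k ≤ ua := by
        refine le_trans ?_ (haup n)
        rw [Finset.range_eq_Ico]
        exact Finset.sum_le_sum_of_subset_of_nonneg
          (Finset.Ico_subset_Ico (Nat.zero_le N) le_rfl) (fun i _ _ => hanonneg i)
      have h9 : ∑ k ∈ Finset.Ico N n, δ k ω =
          ∑ k ∈ range n, (A k).indicator (γ k) ω
            - ∑ k ∈ range N, (A k).indicator (γ k) ω := by
        have h90 : ∑ k ∈ range N, δ k ω + ∑ k ∈ Finset.Ico N n, δ k ω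
            = ∑ k ∈ range n, δ k ω := by
          simp only [Finset.range_eq_Ico]
          exact Finset.sum_Ico_consecutive _ (Nat.zero_le N) hn
        have h91 : ∀ m, ∑ k ∈ range m, δ k ω
            = ∑ k ∈ range m, (A k).indicator (γ k) ω :=
          fun m => Finset.sum_congr rfl (fun k _ => hδind k)
        rw [← h91 n, ← h91 N]
        linarith
      have h10 : D * (∑ k ∈ range n, (A k).indicator (γ k) ω
          - ∑ k ∈ range N, (A k).indicator (γ k) ω) ≤ ua := by
        rw [← h9]; exact h7.trans h8
      have h11 : ∑ k ∈ range n, (A k).indicator (γ k) ω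
          - ∑ k ∈ range N, (A k).indicator (γ k) ω ≤ ua / D :=
        (le_div_iff₀ hDpos).mpr (by linarith)
      linarith
    obtain ⟨n, hn1, hn2⟩ := ((hdivω.eventually_gt_atTop
      (∑ k ∈ range N, (A k).indicator (γ k) ω + ua / D)).and
      (eventually_ge_atTop N)).exists
    exact absurd (hkey n hn2) (not_le.mpr hn1)

/-- almost-sure convergence of the error under the one-step contraction
inequality and the Robbins–Monro conditions.  `(e_n)` is an adapted nonnegative
integrable sequence, `A_n ∈ F_n`, `γ_n ≥ 0` is `F_n`-measurable, and a.s.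
`E[e_{n+1}|F_n] ≤ e_n + 1_{A_n}(−(2Lγ_n − Bγ_n²) e_n + Cγ_n²)`.
If a.s. `Σ γ_n² < ∞` and `Σ 1_{A_n} γ_n = +∞`, then `e_n → 0` a.s. -/
theorem error_tendsto_zero_as {Ω : Type*} [m0 : MeasurableSpace Ω]
    (P : Measure Ω) [IsProbabilityMeasure P]
    (F : Filtration ℕ m0)
    (e : ℕ → Ω → ℝ) (hadapted : Adapted F e)
    (hint : ∀ n, Integrable (e n) P)
    (hnonneg : ∀ n, ∀ᵐ ω ∂P, 0 ≤ e n ω)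
    (A : ℕ → Set Ω) (hA : ∀ n, MeasurableSet[F n] (A n))
    (γ : ℕ → Ω → ℝ) (hγmeas : ∀ n, Measurable[F n] (γ n))
    (hγnonneg : ∀ n, ∀ᵐ ω ∂P, 0 ≤ γ n ω)
    (L B C : ℝ) (hL : 0 < L) (hB : 0 < B) (hC : 0 < C)
    (hstep : ∀ n, ∀ᵐ ω ∂P,
      (P[e (n + 1)|F n]) ω ≤ e n ω +
        (A n).indicator
          (fun ω' => -(2 * L * γ n ω' - B * (γ n ω') ^ 2) * e n ω' + C * (γ n ω') ^ 2) ω)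
    (hγsq : ∀ᵐ ω ∂P, Summable fun n => (γ n ω) ^ 2)
    (hdiv : ∀ᵐ ω ∂P,
      Tendsto (fun N => ∑ n ∈ Finset.range N, (A n).indicator (γ n) ω) atTop atTop) :
    ∀ᵐ ω ∂P, Tendsto (fun n => e n ω) atTop (nhds 0) := by
  have key : ∀ M : ℕ, ∀ᵐ ω ∂P,
      (∀ n, ∑ j ∈ Finset.range (n + 1), (γ j ω) ^ 2 ≤ (M : ℝ)) →
        Tendsto (fun n => e n ω) atTop (nhds 0) := fun M =>
    error_aux P F e hadapted hint hnonneg A hA γ hγmeas hγnonneg L B C hL hB hC hstep hdiv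
      (M : ℝ) (Nat.cast_nonneg M)
  filter_upwards [ae_all_iff.mpr key, hγsq] with ω hω hsum
  obtain ⟨M, hM⟩ := exists_nat_ge (∑' n, (γ n ω) ^ 2)
  refine hω M (fun n => ?_)
  exact le_trans (Summable.sum_le_tsum _ (fun i _ => sq_nonneg _) hsum) hM
end

section
/- Let L > 0 and B > 0 with L² ≤ B, let (v_n)_{n≥0} be nonnegative reals, (δ_n)_{n≥0} a sequence with δ_n ∈ {0,1}, (S_n)_{n≥0} real numbers, and e₀ ≥ 0. For any real sequence γ̃ = (γ̃_n)_{n≥0}, define the error sequence (e_{γ̃}^n)_{n≥0} by e_{γ̃}^0 = e₀ and e_{γ̃}^{n+1} = δ_n[(1 − 2Lγ̃_n + Bγ̃_n²) e_{γ̃}^n + B(2+v_n)γ̃_n² + S_n] + (1−δ_n) e_{γ̃}^n. Let γ = (γ_n)_{n≥0} be the greedy sequence defined along its own trajectory by γ_n = L e_{γ}^n / (B(e_{γ}^n + 2 + v_n)). Assume that e_{γ}^n ≥ 0 for all n. Then for every real sequence γ̃ such that e_{γ̃}^n ≥ 0 for all n, one has e_{γ}^n ≤ e_{γ̃}^n for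 all n ≥ 0. -/
/-!
Writing `f(e, g) = (1 - 2Lg + Bg²) e + B(2+v) g² = e - 2Leg + B(e+2+v) g²`, the greedy rate
is the vertex of this parabola in `g`, so `f(e, greedy e) ≤ f(e, g)` for every `g`; and since
`L² ≤ B` makes the slope `1 - 2Lg + Bg²` nonnegative, `f(·, g)` is monotone. An induction on `n`
then compares the two trajectories step by step, each step being a convex combination (weight
`δ_n`) of the update and of the unchanged error.
-/

/-- The error sequence of the dynamic learning-rate model:
`e⁰ = e₀` and
`e^{n+1} = δ_n [(1 − 2Lγ_n + Bγ_n²) eⁿ + B(2+v_n)γ_n² + S_n] + (1 − δ_n) eⁿ`. -/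
noncomputable def errSeq (L B : ℝ) (v S δ : ℕ → ℝ) (e0 : ℝ) (γ : ℕ → ℝ) : ℕ → ℝ
  | 0 => e0
  | n + 1 =>
      δ n * ((1 - 2 * L * γ n + B * (γ n) ^ 2) * errSeq L B v S δ e0 γ n
              + B * (2 + v n) * (γ n) ^ 2 + S n)
        + (1 - δ n) * errSeq L B v S δ e0 γ n

namespace LearningRate

/-- The paper's `α(g) e + M(g)`. -/
def stepError (L B v e g : ℝ) : ℝ :=
  (1 - 2 * L * g + B * g ^ 2) * e + B * (2 + v) * g ^ 2

noncomputable def greedyRate (L B v e : ℝ) : ℝ :=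
  L * e / (B * (e + 2 + v))

theorem slope_nonneg {L B : ℝ} (hLB : L ^ 2 ≤ B) (g : ℝ) : 0 ≤ 1 - 2 * L * g + B * g ^ 2 := by
  nlinarith [sq_nonneg (1 - L * g), sq_nonneg g]

theorem stepError_mono {L B : ℝ} (hLB : L ^ 2 ≤ B) (v g : ℝ) :
    Monotone fun e ↦ stepError L B v e g := fun _ _ hee ↦ by
  have := slope_nonneg hLB g
  dsimp only [stepError]
  gcongr

theorem stepError_greedyRate_le {L B v e : ℝ} (hB : 0 < B) (hv : 0 ≤ v) (he : 0 ≤ e) (g : ℝ) :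
    stepError L B v e (greedyRate L B v e) ≤ stepError L B v e g := by
  set g₀ := greedyRate L B v e
  have hA : 0 < B * (e + 2 + v) := by positivity
  have hvertex : B * (e + 2 + v) * g₀ = L * e := by
    simp only [g₀, greedyRate]
    field_simp
  have hgap : stepError L B v e g - stepError L B v e g₀ = B * (e + 2 + v) * (g - g₀) ^ 2 := by
    unfold stepError
    linear_combination (2 * g - 2 * g₀) * hvertex
  have := mul_nonneg hA.le (sq_nonneg (g - g₀))
  linarith

theorem errSeq_succ (L B : ℝ) (v S δ : ℕ → ℝ) (e0 : ℝ) (γ : ℕ → ℝ) (n : ℕ) :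
    errSeq L B v S δ e0 γ (n + 1) =
      δ n * (stepError L B (v n) (errSeq L B v S δ e0 γ n) (γ n) + S n)
        + (1 - δ n) * errSeq L B v S δ e0 γ n :=
  rfl

theorem convex_comb_add_le {δ x y s e e' : ℝ} (hδ₀ : 0 ≤ δ) (hδ₁ : δ ≤ 1) (hxy : x ≤ y)
    (hee : e ≤ e') : δ * (x + s) + (1 - δ) * e ≤ δ * (y + s) + (1 - δ) * e' := by
  have : 0 ≤ 1 - δ := by linarith
  gcongr

end LearningRate

open LearningRate in
theorem greedy_learning_rate_optimal_general (L B : ℝ) (hB : 0 < B)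
    (hLB : L ^ 2 ≤ B) (v : ℕ → ℝ) (hv : ∀ n, 0 ≤ v n)
    (δ : ℕ → ℝ) (hδ : ∀ n, δ n = 0 ∨ δ n = 1)
    (S : ℕ → ℝ) (e0 : ℝ)
    (γ : ℕ → ℝ)
    (hγ : ∀ n, γ n = L * errSeq L B v S δ e0 γ n
      / (B * (errSeq L B v S δ e0 γ n + 2 + v n)))
    (hγnonneg : ∀ n, 0 ≤ errSeq L B v S δ e0 γ n)
    (γ' : ℕ → ℝ) :
    ∀ n, errSeq L B v S δ e0 γ n ≤ errSeq L B v S δ e0 γ' n := by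
  intro n
  induction n with
  | zero => rfl
  | succ n ih =>
    have hstep : stepError L B (v n) (errSeq L B v S δ e0 γ n) (γ n)
        ≤ stepError L B (v n) (errSeq L B v S δ e0 γ' n) (γ' n) := calc
      _ = stepError L B (v n) (errSeq L B v S δ e0 γ n)
            (greedyRate L B (v n) (errSeq L B v S δ e0 γ n)) := by rw [hγ n, greedyRate]
      _ ≤ stepError L B (v n) (errSeq L B v S δ e0 γ n) (γ' n) :=
        stepError_greedyRate_le hB (hv n) (hγnonneg n) _
      _ ≤ _ := stepError_mono hLB (v n) (γ' n) ih
    obtain ⟨hδ₀, hδ₁⟩ : 0 ≤ δ n ∧ δ n ≤ 1 := by rcases hδ n with h | h <;> norm_num [h]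
    rw [errSeq_succ, errSeq_succ]
    exact convex_comb_add_le hδ₀ hδ₁ hstep ih

/-- Optimality of the greedy dynamic learning-rate policy.  Let `L, B > 0`
with `L² ≤ B`, `v_n ≥ 0`, `δ_n ∈ {0,1}`, `S_n ∈ ℝ`, `e₀ ≥ 0`.  If `γ` is the greedy
sequence defined along its own trajectory by
`γ_n = L e_γⁿ / (B (e_γⁿ + 2 + v_n))` and `e_γⁿ ≥ 0` for all `n`, then for every real
sequence `γ̃` with `e_{γ̃}ⁿ ≥ 0` for all `n`, one has `e_γⁿ ≤ e_{γ̃}ⁿ` for all `n`. -/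
theorem greedy_learning_rate_optimal (L B : ℝ) (hL : 0 < L) (hB : 0 < B)
    (hLB : L ^ 2 ≤ B) (v : ℕ → ℝ) (hv : ∀ n, 0 ≤ v n)
    (δ : ℕ → ℝ) (hδ : ∀ n, δ n = 0 ∨ δ n = 1)
    (S : ℕ → ℝ) (e0 : ℝ) (he0 : 0 ≤ e0)
    (γ : ℕ → ℝ)
    (hγ : ∀ n, γ n = L * errSeq L B v S δ e0 γ n
      / (B * (errSeq L B v S δ e0 γ n + 2 + v n)))
    (hγnonneg : ∀ n, 0 ≤ errSeq L B v S δ e0 γ n)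
    (γ' : ℕ → ℝ) (hγ'nonneg : ∀ n, 0 ≤ errSeq L B v S δ e0 γ' n) :
    ∀ n, errSeq L B v S δ e0 γ n ≤ errSeq L B v S δ e0 γ' n :=
  greedy_learning_rate_optimal_general L B hB hLB v hv δ hδ S e0 γ hγ hγnonneg γ'
end
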